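/- Let ℓ ≥ 1 and k > ℓ be integers, and let u be a pre-gelation large-cluster solution on [0,T] with monodisperse k-mer initial conditions u_n(0) = 1 if n = k and u_n(0) = 0 otherwise, such that for every j ≥ 0 the moment series m_j(t) = ∑_{n>ℓ} n^j u_n(t) converges uniformly on [0,T]. Then for all t ∈ [0,T], the second moment is given by m₂(t) = (k − ℓt)(k² − 2kℓt + ℓ²t)/(k − 2kt + ℓt). -/

import Mathlib

open Finset Filter Topology

noncomputable section

/-- Total particle number for large clusters `m₁(t) = ∑_{i > ℓ} i u_i(t)`. -/
def m1large (ℓ : ℕ) (u : ℕ → ℝ → ℝ) (t : ℝ) : ℝ :=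
  ∑' i : ℕ, if ℓ + 1 ≤ i then (i : ℝ) * u i t else 0

/-- Right-hand side of the large-cluster equation for `u n` (`n > ℓ`):
`(1/m₁²) ∑_{i=ℓ+1}^{n−1} i(n+ℓ−i) u_i u_{n+ℓ−i} − 2 n u_n/m₁`
(the sum is empty when `n = ℓ+1`). -/
def largeRHS (ℓ : ℕ) (u : ℕ → ℝ → ℝ) (n : ℕ) (t : ℝ) : ℝ :=
  (1 / (m1large ℓ u t) ^ 2) *
      (∑ i ∈ Finset.Icc (ℓ + 1) (n - 1),
        (i : ℝ) * ((n + ℓ - i : ℕ) : ℝ) * u i t * u (n + ℓ - i) t)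
    - 2 * (n : ℝ) * u n t / m1large ℓ u t

/-- A large-cluster solution on `[0,T]`: a nonnegative family
`u_n ∈ C¹([0,T],[0,1])` (`n > ℓ`) solving the large-cluster system, whose
first-moment series converges uniformly on `[0,T]`. -/
structure IsLargeSolution (ℓ : ℕ) (T : ℝ) (u : ℕ → ℝ → ℝ) : Prop where
  mem : ∀ n, ℓ < n → ∀ t ∈ Set.Icc (0 : ℝ) T, u n t ∈ Set.Icc (0 : ℝ) 1
  contDiff : ∀ n, ℓ < n → ContDiffOn ℝ 1 (u n) (Set.Icc 0 T)
  ode : ∀ n, ℓ < n → ∀ t ∈ Set.Icc (0 : ℝ) T,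
    HasDerivWithinAt (u n) (largeRHS ℓ u n t) (Set.Icc 0 T) t
  m1_unif : TendstoUniformlyOn
    (fun N t => ∑ i ∈ Finset.range N, if ℓ + 1 ≤ i then (i : ℝ) * u i t else 0)
    (m1large ℓ u) atTop (Set.Icc 0 T)

/-- A pre-gelation large-cluster solution: in addition the second-moment series
`m₂(t) = ∑_{i > ℓ} i² u_i(t)` converges uniformly on `[0,T]`. -/
structure IsPreGelLargeSolution (ℓ : ℕ) (T : ℝ) (u : ℕ → ℝ → ℝ)
    extends IsLargeSolution ℓ T u : Prop where
  m2_unif : TendstoUniformlyOn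
    (fun N t => ∑ i ∈ Finset.range N, if ℓ + 1 ≤ i then (i : ℝ) ^ 2 * u i t else 0)
    (fun t => ∑' i : ℕ, if ℓ + 1 ≤ i then (i : ℝ) ^ 2 * u i t else 0)
    atTop (Set.Icc 0 T)

/-- The `j`-th moment of a large-cluster solution:
`m_j(t) = ∑_{n > ℓ} n^j u_n(t)`. -/
def largeMoment (ℓ : ℕ) (u : ℕ → ℝ → ℝ) (j : ℕ) (t : ℝ) : ℝ :=
  ∑' n : ℕ, if ℓ + 1 ≤ n then (n : ℝ) ^ j * u n t else 0


/-!
Weighting the equations by `n ^ j` and summing, the coagulation term becomes a convolution whose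
limit is a polynomial in the moments `M_j = largeMoment ℓ u j`; hence, wherever `M₁ > 0`,
`M₁' = -ℓ` and `(M₂ - ℓ M₁)' = 2 ((M₂ - ℓ M₁) / M₁) ^ 2`. Termwise differentiation is justified
by Dini's theorem, the truncated sums being monotone in the truncation. The Riccati equation for
`M₂` has the first integral `ℓ / (M₂ - ℓ M₁) + 2 / M₁`. As `M₂ - ℓ M₁ ≥ M₁ > 0`, its constancy
forces `k - 2kt + ℓt > 0`, hence `ℓt < k`, so `M₁ = k - ℓt` never reaches `0` on `[0, T]`;
solving the first integral for `M₂` gives the formula.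
-/

theorem eq_add_mul_sub_of_hasDerivAt_const {f : ℝ → ℝ} {a b c : ℝ} (hab : a ≤ b)
    (hf : ContinuousOn f (Set.Icc a b)) (hf' : ∀ x ∈ Set.Ioo a b, HasDerivAt f c x) :
    f b = f a + c * (b - a) := by
  rcases hab.eq_or_lt with rfl | hlt
  · simp
  obtain ⟨x, -, hx⟩ := exists_hasDerivAt_eq_slope f (fun _ => c) hlt hf hf'
  rw [eq_div_iff (sub_ne_zero.2 hlt.ne')] at hx
  linarith

theorem forall_Icc_pos_of_Ico_pos {f : ℝ → ℝ} {a b : ℝ} (hf : ContinuousOn f (Set.Icc a b))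
    (h : ∀ t ∈ Set.Icc a b, (∀ s ∈ Set.Ico a t, 0 < f s) → 0 < f t) :
    ∀ t ∈ Set.Icc a b, 0 < f t := by
  by_contra! hbad
  set S := Set.Icc a b ∩ f ⁻¹' Set.Iic 0
  have hS : IsClosed S := hf.preimage_isClosed_of_isClosed isClosed_Icc isClosed_Iic
  have hbdd : BddBelow S := ⟨a, fun s hs => hs.1.1⟩
  have hmem : sInf S ∈ S := hS.csInf_mem hbad hbdd
  refine (h _ hmem.1 fun s hs => ?_).not_ge hmem.2
  by_contra! hs'
  exact hs.2.not_ge (csInf_le hbdd ⟨⟨hs.1, hs.2.le.trans hmem.1.2⟩, hs'⟩)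

section Moments

variable {ℓ k : ℕ} {T t : ℝ} {u : ℕ → ℝ → ℝ}

def partialMoment (ℓ : ℕ) (u : ℕ → ℝ → ℝ) (j N : ℕ) (t : ℝ) : ℝ :=
  ∑ n ∈ range N, if ℓ + 1 ≤ n then (n : ℝ) ^ j * u n t else 0

def MomentsConvergeUniformly (ℓ : ℕ) (T : ℝ) (u : ℕ → ℝ → ℝ) : Prop :=
  ∀ j, TendstoUniformlyOn (partialMoment ℓ u j) (largeMoment ℓ u j) atTop (Set.Icc 0 T)

theorem m1large_eq_largeMoment_one : m1large ℓ u = largeMoment ℓ u 1 := by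
  funext t
  simp only [m1large, largeMoment, pow_one]

theorem largeMoment_zero_of_monodisperse (hk : ℓ < k)
    (hinit : ∀ n, ℓ < n → u n 0 = if n = k then 1 else 0) (j : ℕ) :
    largeMoment ℓ u j 0 = (k : ℝ) ^ j := by
  rw [largeMoment, tsum_eq_single k fun n hn => ?_]
  · simp [hk, hinit k hk]
  · split_ifs with hℓn
    · simp [hinit n hℓn, hn]
    · rfl

theorem continuousOn_partialMoment (hu : IsLargeSolution ℓ T u) (j N : ℕ) :
    ContinuousOn (partialMoment ℓ u j N) (Set.Icc 0 T) := by
  refine continuousOn_finsetSum _ fun n _ => ?_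
  split_ifs with hn
  · exact continuousOn_const.mul (hu.contDiff n hn).continuousOn
  · exact continuousOn_const

theorem continuousOn_largeMoment (hu : IsLargeSolution ℓ T u)
    (hmom : MomentsConvergeUniformly ℓ T u) (j : ℕ) :
    ContinuousOn (largeMoment ℓ u j) (Set.Icc 0 T) :=
  (hmom j).continuousOn (Frequently.of_forall fun N => continuousOn_partialMoment hu j N)

theorem monotone_partialMoment (hu : IsLargeSolution ℓ T u) (ht : t ∈ Set.Icc 0 T) (j : ℕ) :
    Monotone (partialMoment ℓ u j · t) := fun M N hMN =>
  sum_le_sum_of_subset_of_nonneg (range_subset_range.2 hMN) fun n _ _ => by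
    split_ifs with hn
    · exact mul_nonneg (by positivity) (hu.mem n hn t ht).1
    · exact le_rfl

theorem largeMoment_one_le_sub (hu : IsLargeSolution ℓ T u)
    (hmom : MomentsConvergeUniformly ℓ T u) (ht : t ∈ Set.Icc 0 T) :
    largeMoment ℓ u 1 t ≤ largeMoment ℓ u 2 t - ℓ * largeMoment ℓ u 1 t := by
  have h := le_of_tendsto_of_tendsto' (((hmom 1).tendsto_at ht).const_mul ((ℓ : ℝ) + 1))
    ((hmom 2).tendsto_at ht) fun N => by
      rw [partialMoment, partialMoment, mul_sum]
      refine sum_le_sum fun n _ => ?_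
      split_ifs with hn
      · have hnℓ : (ℓ : ℝ) + 1 ≤ n := by exact_mod_cast hn
        have hun := (hu.mem n hn t ht).1
        rw [pow_one]
        nlinarith [mul_le_mul_of_nonneg_right hnℓ (mul_nonneg (Nat.cast_nonneg n) hun)]
      · simp
  linarith

end Moments

section PairSums

variable {ℓ : ℕ} {T t : ℝ} {u : ℕ → ℝ → ℝ}

def squareIndex (ℓ N : ℕ) : Finset (ℕ × ℕ) :=
  (range N ×ˢ range N).filter fun q => ℓ + 1 ≤ q.1 ∧ ℓ + 1 ≤ q.2

def pairIndex (ℓ N : ℕ) : Finset (ℕ × ℕ) :=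
  (squareIndex ℓ N).filter fun q => q.1 + q.2 < N + ℓ

def pairTerm (ℓ : ℕ) (u : ℕ → ℝ → ℝ) (j : ℕ) (t : ℝ) (q : ℕ × ℕ) : ℝ :=
  ((q.1 + q.2 - ℓ : ℕ) : ℝ) ^ j * q.1 * q.2 * u q.1 t * u q.2 t

/-- The `N`-th partial sum of `∑ₙ nʲ ∑_{i + p = n + ℓ} i p uᵢ uₚ`, indexed by the pairs `(i, p)`. -/
def pairSum (ℓ : ℕ) (u : ℕ → ℝ → ℝ) (j N : ℕ) (t : ℝ) : ℝ :=
  ∑ q ∈ pairIndex ℓ N, pairTerm ℓ u j t q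

def squareSum (ℓ : ℕ) (u : ℕ → ℝ → ℝ) (j N : ℕ) (t : ℝ) : ℝ :=
  ∑ q ∈ squareIndex ℓ N, pairTerm ℓ u j t q

theorem pairTerm_nonneg (hu : IsLargeSolution ℓ T u) (ht : t ∈ Set.Icc 0 T) (j : ℕ) {N : ℕ}
    {q : ℕ × ℕ} (hq : q ∈ squareIndex ℓ N) : 0 ≤ pairTerm ℓ u j t q := by
  simp only [squareIndex, mem_filter] at hq
  have h₁ := (hu.mem q.1 hq.2.1 t ht).1
  have h₂ := (hu.mem q.2 hq.2.2 t ht).1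
  unfold pairTerm
  positivity

theorem continuousOn_pairSum (hu : IsLargeSolution ℓ T u) (j N : ℕ) :
    ContinuousOn (pairSum ℓ u j N) (Set.Icc 0 T) := by
  refine continuousOn_finsetSum _ fun q hq => ?_
  simp only [pairIndex, squareIndex, mem_filter] at hq
  exact ((continuousOn_const.mul (hu.contDiff q.1 hq.1.2.1).continuousOn).mul
    (hu.contDiff q.2 hq.1.2.2).continuousOn)

theorem monotone_pairSum (hu : IsLargeSolution ℓ T u) (ht : t ∈ Set.Icc 0 T) (j : ℕ) :
    Monotone (pairSum ℓ u j · t) := fun M N hMN => by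
  refine sum_le_sum_of_subset_of_nonneg (fun q hq => ?_)
    fun q hq _ => pairTerm_nonneg hu ht j (mem_filter.1 hq).1
  simp only [pairIndex, squareIndex, mem_filter, mem_product, mem_range] at hq ⊢
  omega

theorem tendsto_pairSum_of_squareSum (hu : IsLargeSolution ℓ T u) (ht : t ∈ Set.Icc 0 T)
    {j : ℕ} {g : ℝ} (h : Tendsto (squareSum ℓ u j · t) atTop (𝓝 g)) :
    Tendsto (pairSum ℓ u j · t) atTop (𝓝 g) := by
  refine tendsto_of_tendsto_of_tendsto_of_le_of_le
    (h.comp (Nat.tendsto_div_const_atTop two_ne_zero)) h (fun N => ?_) fun N => ?_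
  · refine sum_le_sum_of_subset_of_nonneg (fun q hq => ?_)
      fun q hq _ => pairTerm_nonneg hu ht j (mem_filter.1 hq).1
    simp only [pairIndex, squareIndex, mem_filter, mem_product, mem_range] at hq ⊢
    omega
  · exact sum_le_sum_of_subset_of_nonneg (filter_subset _ _)
      fun q hq _ => pairTerm_nonneg hu ht j hq

theorem squareSum_eq_sum_sum (j N : ℕ) (t : ℝ) :
    squareSum ℓ u j N t = ∑ i ∈ (range N).filter (ℓ + 1 ≤ ·), ∑ p ∈ (range N).filter (ℓ + 1 ≤ ·),
      ((i : ℝ) + p - ℓ) ^ j * (i * u i t) * (p * u p t) := by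
  rw [squareSum, squareIndex, filter_product, sum_product]
  refine sum_congr rfl fun i hi => sum_congr rfl fun p hp => ?_
  simp only [mem_filter] at hi hp
  rw [pairTerm, Nat.cast_sub (by omega), Nat.cast_add]
  ring

theorem partialMoment_eq_sum_filter (j N : ℕ) (t : ℝ) :
    partialMoment ℓ u j N t = ∑ n ∈ (range N).filter (ℓ + 1 ≤ ·), (n : ℝ) ^ j * u n t := by
  rw [partialMoment, sum_filter]

theorem squareSum_one (N : ℕ) (t : ℝ) :
    squareSum ℓ u 1 N t =
      2 * partialMoment ℓ u 2 N t * partialMoment ℓ u 1 N t - ℓ * partialMoment ℓ u 1 N t ^ 2 := by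
  -- symmetrized, so that both sides agree term by term as double sums
  rw [show ∀ a b : ℝ, 2 * a * b - ℓ * b ^ 2 = a * b + b * a - ℓ * (b * b) by intros; ring]
  simp only [squareSum_eq_sum_sum, partialMoment_eq_sum_filter, sum_mul_sum]
  simp only [mul_sum, ← sum_add_distrib, ← sum_sub_distrib]
  refine sum_congr rfl fun i _ => sum_congr rfl fun p _ => ?_
  ring

theorem squareSum_two (N : ℕ) (t : ℝ) :
    squareSum ℓ u 2 N t =
      2 * partialMoment ℓ u 3 N t * partialMoment ℓ u 1 N t + 2 * partialMoment ℓ u 2 N t ^ 2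
        - 4 * ℓ * partialMoment ℓ u 2 N t * partialMoment ℓ u 1 N t
        + ℓ ^ 2 * partialMoment ℓ u 1 N t ^ 2 := by
  rw [show ∀ a b c : ℝ, 2 * a * c + 2 * b ^ 2 - 4 * ℓ * b * c + ℓ ^ 2 * c ^ 2 =
      a * c + c * a + 2 * (b * b) - 2 * ℓ * (b * c + c * b) + ℓ ^ 2 * (c * c) by intros; ring]
  simp only [squareSum_eq_sum_sum, partialMoment_eq_sum_filter, sum_mul_sum]
  simp only [mul_sum, ← sum_add_distrib, ← sum_sub_distrib]
  refine sum_congr rfl fun i _ => sum_congr rfl fun p _ => ?_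
  ring

end PairSums

section Derivatives

variable {ℓ : ℕ} {T t : ℝ} {u : ℕ → ℝ → ℝ}

theorem sum_convolution_eq_pairSum (j N : ℕ) (t : ℝ) :
    ∑ n ∈ range N, (if ℓ + 1 ≤ n then (n : ℝ) ^ j *
      ∑ i ∈ Icc (ℓ + 1) (n - 1), (i : ℝ) * ((n + ℓ - i : ℕ) : ℝ) * u i t * u (n + ℓ - i) t
      else 0) = pairSum ℓ u j N t := by
  rw [← sum_filter, pairSum]
  simp only [mul_sum]
  rw [sum_sigma']
  refine sum_nbij' (fun a => (a.2, a.1 + ℓ - a.2)) (fun q => ⟨q.1 + q.2 - ℓ, q.1⟩)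
    ?_ ?_ ?_ ?_ ?_
  all_goals
    rintro ⟨a, b⟩ h
    simp only [mem_sigma, mem_filter, mem_range, mem_Icc, pairIndex, squareIndex, mem_product]
      at h ⊢
  · omega
  · omega
  · rw [Sigma.mk.injEq]
    exact ⟨by omega, HEq.rfl⟩
  · rw [Prod.mk.injEq]
    omega
  · rw [pairTerm, show b + (a + ℓ - b) - ℓ = a by omega]
    ring

theorem hasDerivAt_partialMoment (hu : IsLargeSolution ℓ T u) (j N : ℕ)
    (ht : t ∈ Set.Ioo 0 T) :
    HasDerivAt (partialMoment ℓ u j N)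
      (pairSum ℓ u j N t / largeMoment ℓ u 1 t ^ 2
        - 2 * partialMoment ℓ u (j + 1) N t / largeMoment ℓ u 1 t) t := by
  have hderiv : HasDerivAt (partialMoment ℓ u j N)
      (∑ n ∈ range N, if ℓ + 1 ≤ n then (n : ℝ) ^ j * largeRHS ℓ u n t else 0) t := by
    refine HasDerivAt.fun_sum fun n _ => ?_
    split_ifs with hn
    · exact ((hu.ode n hn t (Set.Ioo_subset_Icc_self ht)).hasDerivAt
        (Icc_mem_nhds ht.1 ht.2)).const_mul _
    · exact hasDerivAt_const t 0
  convert hderiv using 1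
  rw [← sum_convolution_eq_pairSum, partialMoment, sum_div, mul_sum, sum_div, ← sum_sub_distrib]
  refine sum_congr rfl fun n _ => ?_
  split_ifs
  · rw [largeRHS, m1large_eq_largeMoment_one]
    ring
  · simp

theorem hasDerivAt_largeMoment (hu : IsLargeSolution ℓ T u)
    (hmom : MomentsConvergeUniformly ℓ T u) {j : ℕ} {G : ℝ → ℝ}
    (hpair : ∀ t ∈ Set.Icc 0 T, Tendsto (pairSum ℓ u j · t) atTop (𝓝 (G t)))
    (hG : ContinuousOn G (Set.Icc 0 T))
    (ht : t ∈ Set.Ioo 0 T) (hpos : 0 < largeMoment ℓ u 1 t) :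
    HasDerivAt (largeMoment ℓ u j)
      (G t / largeMoment ℓ u 1 t ^ 2 - 2 * largeMoment ℓ u (j + 1) t / largeMoment ℓ u 1 t) t := by
  set M := largeMoment ℓ u 1
  set U := Set.Ioo 0 T ∩ M ⁻¹' Set.Ioi 0
  have hUT : U ⊆ Set.Icc 0 T := fun s hs => Set.Ioo_subset_Icc_self hs.1
  have hU : IsOpen U := ((continuousOn_largeMoment hu hmom 1).mono
    Set.Ioo_subset_Icc_self).isOpen_inter_preimage isOpen_Ioo isOpen_Ioi
  have hMU : ContinuousOn M U := (continuousOn_largeMoment hu hmom 1).mono hUT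
  have hMU0 : ∀ s ∈ U, M s ≠ 0 := fun s hs => (hs.2 : 0 < M s).ne'
  have hM2U0 : ∀ s ∈ U, M s ^ 2 ≠ 0 := fun s hs => pow_ne_zero 2 (hMU0 s hs)
  have hgain : TendstoLocallyUniformlyOn (fun N s => pairSum ℓ u j N s / M s ^ 2)
      (fun s => G s / M s ^ 2) atTop U :=
    Monotone.tendstoLocallyUniformlyOn_of_forall_tendsto
      (fun N => ((continuousOn_pairSum hu j N).mono hUT).div (hMU.pow 2) hM2U0)
      (fun s hs => (monotone_pairSum hu (hUT hs) j).div_const (sq_nonneg _))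
      ((hG.mono hUT).div (hMU.pow 2) hM2U0)
      fun s hs => (hpair s (hUT hs)).div_const _
  have hloss : TendstoLocallyUniformlyOn (fun N s => 2 * partialMoment ℓ u (j + 1) N s / M s)
      (fun s => 2 * largeMoment ℓ u (j + 1) s / M s) atTop U :=
    Monotone.tendstoLocallyUniformlyOn_of_forall_tendsto
      (fun N => (continuousOn_const.mul ((continuousOn_partialMoment hu (j + 1) N).mono hUT)).div
        hMU hMU0)
      (fun s hs => ((monotone_partialMoment hu (hUT hs) (j + 1)).const_mul zero_le_two).div_const
        (hs.2 : 0 < M s).le)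
      ((continuousOn_const.mul ((continuousOn_largeMoment hu hmom (j + 1)).mono hUT)).div
        hMU hMU0)
      fun s hs => (((hmom (j + 1)).tendsto_at (hUT hs)).const_mul 2).div_const _
  exact hasDerivAt_of_tendstoLocallyUniformlyOn hU (hgain.fun_sub hloss)
    (Eventually.of_forall fun N s hs => hasDerivAt_partialMoment hu j N hs.1)
    (fun s hs => (hmom j).tendsto_at (hUT hs)) ⟨ht, hpos⟩

theorem hasDerivAt_largeMoment_one (hu : IsLargeSolution ℓ T u)
    (hmom : MomentsConvergeUniformly ℓ T u) (ht : t ∈ Set.Ioo 0 T)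
    (hpos : 0 < largeMoment ℓ u 1 t) :
    HasDerivAt (largeMoment ℓ u 1) (-ℓ) t := by
  have hM := continuousOn_largeMoment hu hmom
  have hlim : ∀ s ∈ Set.Icc 0 T, Tendsto (pairSum ℓ u 1 · s) atTop
      (𝓝 (2 * largeMoment ℓ u 2 s * largeMoment ℓ u 1 s - ℓ * largeMoment ℓ u 1 s ^ 2)) :=
    fun s hs => tendsto_pairSum_of_squareSum hu hs <| by
      simp only [squareSum_one]
      have hm j := (hmom j).tendsto_at hs
      exact ((tendsto_const_nhds.mul (hm 2)).mul (hm 1)).sub (tendsto_const_nhds.mul ((hm 1).pow 2))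
  convert hasDerivAt_largeMoment hu hmom hlim (((continuousOn_const.mul (hM 2)).mul (hM 1)).sub
    (continuousOn_const.mul ((hM 1).pow 2))) ht hpos using 1
  field_simp
  ring

theorem hasDerivAt_largeMoment_two (hu : IsLargeSolution ℓ T u)
    (hmom : MomentsConvergeUniformly ℓ T u) (ht : t ∈ Set.Ioo 0 T)
    (hpos : 0 < largeMoment ℓ u 1 t) :
    HasDerivAt (largeMoment ℓ u 2)
      (2 * (largeMoment ℓ u 2 t / largeMoment ℓ u 1 t - ℓ) ^ 2 - ℓ ^ 2) t := by
  have hM := continuousOn_largeMoment hu hmom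
  have hlim : ∀ s ∈ Set.Icc 0 T, Tendsto (pairSum ℓ u 2 · s) atTop
      (𝓝 (2 * largeMoment ℓ u 3 s * largeMoment ℓ u 1 s + 2 * largeMoment ℓ u 2 s ^ 2
        - 4 * ℓ * largeMoment ℓ u 2 s * largeMoment ℓ u 1 s
        + ℓ ^ 2 * largeMoment ℓ u 1 s ^ 2)) :=
    fun s hs => tendsto_pairSum_of_squareSum hu hs <| by
      simp only [squareSum_two]
      have hm j := (hmom j).tendsto_at hs
      exact ((((tendsto_const_nhds.mul (hm 3)).mul (hm 1)).add
        (tendsto_const_nhds.mul ((hm 2).pow 2))).sub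
        ((tendsto_const_nhds.mul (hm 2)).mul (hm 1))).add
        (tendsto_const_nhds.mul ((hm 1).pow 2))
  convert hasDerivAt_largeMoment hu hmom hlim (((((continuousOn_const.mul (hM 3)).mul (hM 1)).add
    (continuousOn_const.mul ((hM 2).pow 2))).sub ((continuousOn_const.mul (hM 2)).mul (hM 1))).add
    (continuousOn_const.mul ((hM 1).pow 2))) ht hpos using 1
  field_simp
  ring

end Derivatives

theorem riccati_solution_of_firstIntegral {k ℓ t m₂ : ℝ} (hℓ : 0 < ℓ) (hk : ℓ < k)
    (hm : 0 < k - ℓ * t) (hA : 0 < m₂ - ℓ * (k - ℓ * t))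
    (h : ℓ / (m₂ - ℓ * (k - ℓ * t)) + 2 / (k - ℓ * t) = ℓ / (k ^ 2 - ℓ * k) + 2 / k) :
    0 < k - 2 * k * t + ℓ * t ∧
      m₂ = (k - ℓ * t) * (k ^ 2 - 2 * k * ℓ * t + ℓ ^ 2 * t) / (k - 2 * k * t + ℓ * t) := by
  have hk0 : 0 < k := by linarith
  have hkℓ : k - ℓ ≠ 0 := by linarith
  have hm' := hm.ne'
  have key : (m₂ - ℓ * (k - ℓ * t)) * (k - 2 * k * t + ℓ * t) = k * (k - ℓ) * (k - ℓ * t) := by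
    field_simp at h
    apply mul_left_cancel₀ hℓ.ne'
    linear_combination -h
  have hD : 0 < k - 2 * k * t + ℓ * t := by
    refine pos_of_mul_pos_right ?_ hA.le
    rw [key]
    exact mul_pos (mul_pos hk0 (sub_pos.2 hk)) hm
  refine ⟨hD, ?_⟩
  rw [eq_div_iff hD.ne']
  linear_combination key

section FirstIntegral

variable {ℓ k : ℕ} {T t : ℝ} {u : ℕ → ℝ → ℝ}

def firstIntegral (ℓ : ℕ) (u : ℕ → ℝ → ℝ) (t : ℝ) : ℝ :=
  ℓ / (largeMoment ℓ u 2 t - ℓ * largeMoment ℓ u 1 t) + 2 / largeMoment ℓ u 1 t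

theorem hasDerivAt_firstIntegral (hu : IsLargeSolution ℓ T u)
    (hmom : MomentsConvergeUniformly ℓ T u) (ht : t ∈ Set.Ioo 0 T)
    (hpos : 0 < largeMoment ℓ u 1 t) :
    HasDerivAt (firstIntegral ℓ u) 0 t := by
  have hA : 0 < largeMoment ℓ u 2 t - ℓ * largeMoment ℓ u 1 t :=
    hpos.trans_le (largeMoment_one_le_sub hu hmom (Set.Ioo_subset_Icc_self ht))
  have h₁ := hasDerivAt_largeMoment_one hu hmom ht hpos
  have h₂ := hasDerivAt_largeMoment_two hu hmom ht hpos
  unfold firstIntegral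
  refine (((hasDerivAt_const t (ℓ : ℝ)).fun_div (h₂.fun_sub (h₁.const_mul (ℓ : ℝ)))
    hA.ne').fun_add ((hasDerivAt_const t (2 : ℝ)).fun_div h₁ hpos.ne')).congr_deriv ?_
  field_simp
  ring

theorem largeMoment_one_eq (hu : IsLargeSolution ℓ T u) (hmom : MomentsConvergeUniformly ℓ T u)
    (hk : ℓ < k) (hinit : ∀ n, ℓ < n → u n 0 = if n = k then 1 else 0)
    (ht : t ∈ Set.Icc 0 T) (hpos : ∀ s ∈ Set.Ico 0 t, 0 < largeMoment ℓ u 1 s) :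
    largeMoment ℓ u 1 t = k - ℓ * t := by
  rw [eq_add_mul_sub_of_hasDerivAt_const ht.1
    ((continuousOn_largeMoment hu hmom 1).mono (Set.Icc_subset_Icc le_rfl ht.2))
    fun s hs => hasDerivAt_largeMoment_one hu hmom ⟨hs.1, hs.2.trans_le ht.2⟩
      (hpos s (Set.Ioo_subset_Ico_self hs)),
    largeMoment_zero_of_monodisperse hk hinit, pow_one]
  ring

theorem firstIntegral_eq (hu : IsLargeSolution ℓ T u) (hmom : MomentsConvergeUniformly ℓ T u)
    (hk : ℓ < k) (hinit : ∀ n, ℓ < n → u n 0 = if n = k then 1 else 0)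
    (ht : t ∈ Set.Icc 0 T) (hpos : ∀ s ∈ Set.Icc 0 t, 0 < largeMoment ℓ u 1 s) :
    firstIntegral ℓ u t = ℓ / ((k : ℝ) ^ 2 - ℓ * k) + 2 / k := by
  have hM j := (continuousOn_largeMoment hu hmom j).mono (Set.Icc_subset_Icc le_rfl ht.2)
  have hA : ∀ s ∈ Set.Icc 0 t, largeMoment ℓ u 2 s - ℓ * largeMoment ℓ u 1 s ≠ 0 := fun s hs =>
    ((hpos s hs).trans_le (largeMoment_one_le_sub hu hmom ⟨hs.1, hs.2.trans ht.2⟩)).ne'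
  have hcont : ContinuousOn (firstIntegral ℓ u) (Set.Icc 0 t) :=
    (continuousOn_const.div ((hM 2).sub (continuousOn_const.mul (hM 1))) hA).add
      (continuousOn_const.div (hM 1) fun s hs => (hpos s hs).ne')
  have hderiv : ∀ s ∈ Set.Ioo 0 t, HasDerivAt (firstIntegral ℓ u) 0 s := fun s hs =>
    hasDerivAt_firstIntegral hu hmom ⟨hs.1, hs.2.trans_le ht.2⟩
      (hpos s (Set.Ioo_subset_Icc_self hs))
  rw [eq_add_mul_sub_of_hasDerivAt_const ht.1 hcont hderiv, firstIntegral,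
    largeMoment_zero_of_monodisperse hk hinit, largeMoment_zero_of_monodisperse hk hinit, pow_one]
  ring

theorem secondMoment_formula_of_pos (hu : IsLargeSolution ℓ T u)
    (hmom : MomentsConvergeUniformly ℓ T u) (hℓ : 1 ≤ ℓ) (hk : ℓ < k)
    (hinit : ∀ n, ℓ < n → u n 0 = if n = k then 1 else 0)
    (ht : t ∈ Set.Icc 0 T) (hpos : ∀ s ∈ Set.Icc 0 t, 0 < largeMoment ℓ u 1 s) :
    0 < (k : ℝ) - 2 * k * t + ℓ * t ∧
      largeMoment ℓ u 2 t = ((k : ℝ) - ℓ * t) * ((k : ℝ) ^ 2 - 2 * k * ℓ * t + ℓ ^ 2 * t) /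
        ((k : ℝ) - 2 * k * t + ℓ * t) := by
  have hpos_t := hpos t ⟨ht.1, le_rfl⟩
  have hm := largeMoment_one_eq hu hmom hk hinit ht fun s hs => hpos s (Set.Ico_subset_Icc_self hs)
  have hA := hpos_t.trans_le (largeMoment_one_le_sub hu hmom ht)
  have hI := firstIntegral_eq hu hmom hk hinit ht hpos
  rw [firstIntegral, hm] at hI
  rw [hm] at hA hpos_t
  exact riccati_solution_of_firstIntegral (by exact_mod_cast hℓ) (by exact_mod_cast hk) hpos_t hA hI

theorem largeMoment_one_pos (hu : IsLargeSolution ℓ T u) (hmom : MomentsConvergeUniformly ℓ T u)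
    (hℓ : 1 ≤ ℓ) (hk : ℓ < k) (hinit : ∀ n, ℓ < n → u n 0 = if n = k then 1 else 0) :
    ∀ t ∈ Set.Icc 0 T, 0 < largeMoment ℓ u 1 t := by
  refine forall_Icc_pos_of_Ico_pos (continuousOn_largeMoment hu hmom 1) fun t ht hpos => ?_
  have hkℓ : (ℓ : ℝ) < k := by exact_mod_cast hk
  have hℓ0 : (0 : ℝ) ≤ ℓ := Nat.cast_nonneg ℓ
  have hD : ∀ s ∈ Set.Ico 0 t, 0 < (k : ℝ) - 2 * k * s + ℓ * s := fun s hs =>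
    (secondMoment_formula_of_pos hu hmom hℓ hk hinit ⟨hs.1, hs.2.le.trans ht.2⟩
      fun r hr => hpos r ⟨hr.1, hr.2.trans_lt hs.2⟩).1
  have hts : (2 * k - ℓ) * t ≤ (k : ℝ) := by
    by_contra! h
    have h2kℓ : (0 : ℝ) < 2 * k - ℓ := by linarith
    have hs : (2 * k - ℓ) * (k / (2 * k - ℓ)) = (k : ℝ) := mul_div_cancel₀ _ h2kℓ.ne'
    have := hD (k / (2 * k - ℓ)) ⟨by positivity, (div_lt_iff₀' h2kℓ).2 h⟩
    linarith
  rw [largeMoment_one_eq hu hmom hk hinit ht hpos]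
  nlinarith [ht.1]

end FirstIntegral

theorem second_moment_formula_general (ℓ k : ℕ) (hℓ : 1 ≤ ℓ) (hk : ℓ < k)
    (T : ℝ)
    (u : ℕ → ℝ → ℝ) (hu : IsPreGelLargeSolution ℓ T u)
    (hinit : ∀ n, ℓ < n → u n 0 = if n = k then 1 else 0)
    (hmom : ∀ j : ℕ, TendstoUniformlyOn
      (fun N t => ∑ n ∈ Finset.range N,
        if ℓ + 1 ≤ n then (n : ℝ) ^ j * u n t else 0)
      (largeMoment ℓ u j) atTop (Set.Icc 0 T)) :
    ∀ t ∈ Set.Icc (0 : ℝ) T,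
      largeMoment ℓ u 2 t =
        ((k : ℝ) - (ℓ : ℝ) * t) *
          ((k : ℝ) ^ 2 - 2 * (k : ℝ) * (ℓ : ℝ) * t + (ℓ : ℝ) ^ 2 * t) /
          ((k : ℝ) - 2 * (k : ℝ) * t + (ℓ : ℝ) * t) := by
  have hpos := largeMoment_one_pos hu.toIsLargeSolution hmom hℓ hk hinit
  exact fun t ht => (secondMoment_formula_of_pos hu.toIsLargeSolution hmom hℓ hk hinit ht
    fun s hs => hpos s ⟨hs.1, hs.2.trans ht.2⟩).2

/-- let `ℓ ≥ 1`, `k > ℓ`, and let `u` be a pre-gelation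
large-cluster solution on `[0,T]` with monodisperse `k`-mer initial conditions
`u_n(0) = δ_{n,k}`, all of whose moment series converge uniformly on `[0,T]`.
Then `m₂(t) = (k − ℓt)(k² − 2kℓt + ℓ²t)/(k − 2kt + ℓt)` on `[0,T]`. -/
theorem second_moment_formula (ℓ k : ℕ) (hℓ : 1 ≤ ℓ) (hk : ℓ < k)
    (T : ℝ) (hT : 0 < T)
    (u : ℕ → ℝ → ℝ) (hu : IsPreGelLargeSolution ℓ T u)
    (hinit : ∀ n, ℓ < n → u n 0 = if n = k then 1 else 0)
    (hmom : ∀ j : ℕ, TendstoUniformlyOn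
      (fun N t => ∑ n ∈ Finset.range N,
        if ℓ + 1 ≤ n then (n : ℝ) ^ j * u n t else 0)
      (largeMoment ℓ u j) atTop (Set.Icc 0 T)) :
    ∀ t ∈ Set.Icc (0 : ℝ) T,
      largeMoment ℓ u 2 t =
        ((k : ℝ) - (ℓ : ℝ) * t) *
          ((k : ℝ) ^ 2 - 2 * (k : ℝ) * (ℓ : ℝ) * t + (ℓ : ℝ) ^ 2 * t) /
          ((k : ℝ) - 2 * (k : ℝ) * t + (ℓ : ℝ) * t) :=
  second_moment_formula_general ℓ k hℓ hk T u hu hinit hmom
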